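/- If ‖h‖_{p,Q} < ∞ for some p > 2 and I_α(P‖Q) < ∞ for some α ∈ (p/(p−1), 2p/(p−2)), then the truncation bias satisfies |E_Q[h·min(l,τ)] − E_P[h]| ≤ ‖h‖_{p,Q} · τ^{1−α+α/p} · I_α(P‖Q)^{1−1/p} for any τ > 0. -/

import Mathlib

/-!
Since `P ≪ Q`, `E_P[h] = E_Q[h l]`, so the bias is `-E_Q[h (l - min l τ)]`. Hölder's inequality
with exponents `p` and `q = p/(p-1)` bounds it by `‖h‖_{p,Q} ‖l - min l τ‖_{q,Q}`. The truncation
error `l - min l τ` vanishes on `{l ≤ τ}` and is at most `l` elsewhere, so for `α ≥ q` its `q`-th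
power is at most `τ^(q-α) l^α`, whence `‖l - min l τ‖_{q,Q} ≤ (τ^(q-α) I_α(P‖Q))^(1/q)`.
-/

open MeasureTheory

noncomputable def lr {X : Type*} [MeasurableSpace X] (P Q : Measure X) (x : X) : ℝ :=
  (P.rnDeriv Q x).toReal

noncomputable def Ialpha {X : Type*} [MeasurableSpace X] (P Q : Measure X) (α : ℝ) : ℝ :=
  ∫ x, lr P Q x ^ α ∂Q

noncomputable def pNorm {X : Type*} [MeasurableSpace X] (h : X → ℝ) (p : ℝ) (Q : Measure X) : ℝ :=
  (∫ x, |h x| ^ p ∂Q) ^ (1 / p)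

lemma Real.sub_min_rpow_le_mul_rpow {l τ q α : ℝ} (hl : 0 ≤ l) (hτ : 0 < τ) (hq : 0 < q)
    (hqα : q ≤ α) : (l - min l τ) ^ q ≤ τ ^ (q - α) * l ^ α := by
  rcases le_or_gt l τ with hlτ | hτl
  · rw [min_eq_left hlτ, sub_self, Real.zero_rpow hq.ne']
    positivity
  · have hl0 : 0 < l := hτ.trans hτl
    rw [min_eq_right hτl.le]
    calc (l - τ) ^ q ≤ l ^ q := Real.rpow_le_rpow (by linarith) (by linarith) hq.le
      _ = l ^ (q - α) * l ^ α := by rw [← Real.rpow_add hl0, sub_add_cancel]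
      _ ≤ τ ^ (q - α) * l ^ α :=
        mul_le_mul_of_nonneg_right (Real.rpow_le_rpow_of_nonpos hτ hτl.le (by linarith))
          (Real.rpow_nonneg hl _)

section

variable {X : Type*} [MeasurableSpace X]

lemma lr_nonneg (P Q : Measure X) (x : X) : 0 ≤ lr P Q x := ENNReal.toReal_nonneg

lemma measurable_lr (P Q : Measure X) : Measurable (lr P Q) :=
  (Measure.measurable_rnDeriv P Q).ennreal_toReal

lemma integral_eq_integral_mul_lr {P Q : Measure X} [SigmaFinite P]
    [P.HaveLebesgueDecomposition Q] (hPQ : P ≪ Q) (h : X → ℝ) :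
    ∫ x, h x ∂P = ∫ x, h x * lr P Q x ∂Q := by
  simp_rw [mul_comm (h _)]
  exact (integral_toReal_rnDeriv_mul hPQ).symm

lemma memLp_of_integrable_abs_rpow {μ : Measure X} {f : X → ℝ} {p : ℝ}
    (hf : AEStronglyMeasurable f μ) (hp : 0 < p) (hint : Integrable (fun x => |f x| ^ p) μ) :
    MemLp f (ENNReal.ofReal p) μ := by
  rw [← integrable_norm_rpow_iff hf (by simpa using hp) ENNReal.ofReal_ne_top,
    ENNReal.toReal_ofReal hp.le]
  simpa only [Real.norm_eq_abs] using hint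

variable {μ : Measure X} {l : X → ℝ} {τ q α : ℝ}

lemma memLp_sub_min_of_integrable_rpow (hl : ∀ x, 0 ≤ l x) (hlm : Measurable l) (hτ : 0 < τ)
    (hq : 0 < q) (hqα : q ≤ α) (hα : Integrable (fun x => l x ^ α) μ) :
    MemLp (fun x => l x - min (l x) τ) (ENNReal.ofReal q) μ := by
  refine memLp_of_integrable_abs_rpow (hlm.sub (hlm.min measurable_const)).aestronglyMeasurable hq
    ((hα.const_mul (τ ^ (q - α))).mono' ?_ (ae_of_all _ fun x => ?_))
  · exact ((hlm.sub (hlm.min measurable_const)).abs.pow_const q).aestronglyMeasurable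
  · have hsub : 0 ≤ l x - min (l x) τ := sub_nonneg.2 (min_le_left _ _)
    rw [abs_of_nonneg hsub, Real.norm_of_nonneg (Real.rpow_nonneg hsub q)]
    exact Real.sub_min_rpow_le_mul_rpow (hl x) hτ hq hqα

lemma integral_sub_min_rpow_le (hl : ∀ x, 0 ≤ l x) (hτ : 0 < τ) (hq : 0 < q) (hqα : q ≤ α)
    (hα : Integrable (fun x => l x ^ α) μ) :
    ∫ x, (l x - min (l x) τ) ^ q ∂μ ≤ τ ^ (q - α) * ∫ x, l x ^ α ∂μ := by
  rw [← integral_const_mul]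
  exact integral_mono_of_nonneg
    (ae_of_all _ fun x => Real.rpow_nonneg (sub_nonneg.2 (min_le_left _ _)) q) (hα.const_mul _)
    (ae_of_all _ fun x => Real.sub_min_rpow_le_mul_rpow (hl x) hτ hq hqα)

lemma abs_integral_mul_sub_min_le {f : X → ℝ} {p : ℝ} (hpq : p.HolderConjugate q)
    (hf : MemLp f (ENNReal.ofReal p) μ) (hl : ∀ x, 0 ≤ l x) (hlm : Measurable l) (hτ : 0 < τ)
    (hqα : q ≤ α) (hα : Integrable (fun x => l x ^ α) μ) :
    |∫ x, f x * (l x - min (l x) τ) ∂μ| ≤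
      (∫ x, |f x| ^ p ∂μ) ^ (1 / p) * (τ ^ (q - α) * ∫ x, l x ^ α ∂μ) ^ (1 / q) := by
  have hsub : ∀ x, 0 ≤ l x - min (l x) τ := fun x => sub_nonneg.2 (min_le_left _ _)
  calc |∫ x, f x * (l x - min (l x) τ) ∂μ|
      ≤ ∫ x, ‖f x‖ * ‖l x - min (l x) τ‖ ∂μ := by
        simp only [Real.norm_eq_abs, ← abs_mul]
        exact abs_integral_le_integral_abs
    _ ≤ (∫ x, ‖f x‖ ^ p ∂μ) ^ (1 / p) * (∫ x, ‖l x - min (l x) τ‖ ^ q ∂μ) ^ (1 / q) :=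
        integral_mul_norm_le_Lp_mul_Lq hpq hf
          (memLp_sub_min_of_integrable_rpow hl hlm hτ hpq.symm.pos hqα hα)
    _ ≤ (∫ x, |f x| ^ p ∂μ) ^ (1 / p) * (τ ^ (q - α) * ∫ x, l x ^ α ∂μ) ^ (1 / q) := by
        simp only [Real.norm_eq_abs, abs_of_nonneg (hsub _)]
        exact mul_le_mul_of_nonneg_left
          (Real.rpow_le_rpow (integral_nonneg fun x => Real.rpow_nonneg (hsub x) q)
            (integral_sub_min_rpow_le hl hτ hpq.symm.pos hqα hα) (one_div_nonneg.2 hpq.symm.nonneg))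
          (Real.rpow_nonneg (integral_nonneg fun x => Real.rpow_nonneg (abs_nonneg _) p) _)

lemma integral_mul_min_lr_sub_integral {P Q : Measure X} [SigmaFinite P]
    [P.HaveLebesgueDecomposition Q] (hPQ : P ≪ Q) {h : X → ℝ} (hh : Integrable h Q)
    (hhg : Integrable (fun x => h x * (lr P Q x - min (lr P Q x) τ)) Q) :
    ∫ x, h x * min (lr P Q x) τ ∂Q - ∫ x, h x ∂P =
      -∫ x, h x * (lr P Q x - min (lr P Q x) τ) ∂Q := by
  have hmin : Integrable (fun x => h x * min (lr P Q x) τ) Q :=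
    hh.mul_bdd ((measurable_lr P Q).min measurable_const).aestronglyMeasurable
      (ae_of_all _ fun x => abs_le.2
        ⟨le_min (by linarith [lr_nonneg P Q x, abs_nonneg τ]) (neg_abs_le τ),
          (min_le_right _ _).trans (le_abs_self τ)⟩)
  have hsplit : ∫ x, h x * lr P Q x ∂Q =
      ∫ x, h x * min (lr P Q x) τ ∂Q + ∫ x, h x * (lr P Q x - min (lr P Q x) τ) ∂Q := by
    rw [← integral_add hmin hhg]
    congr 1 with x
    ring
  rw [integral_eq_integral_mul_lr hPQ, hsplit]
  ring

end

theorem truncated_lr_bias_bound_pNorm_general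
    {X : Type*} [MeasurableSpace X]
    (P Q : Measure X) [IsProbabilityMeasure P] [IsProbabilityMeasure Q]
    (hPQ : P ≪ Q) (h : X → ℝ) (hmeas : Measurable h)
    (p : ℝ) (hp : 2 < p) (hpnorm : Integrable (fun x => |h x| ^ p) Q)
    (α : ℝ) (hα1 : p / (p - 1) < α)
    (hI : Integrable (fun x => lr P Q x ^ α) Q)
    (τ : ℝ) (hτ : 0 < τ) :
    |(∫ x, h x * min (lr P Q x) τ ∂Q) - ∫ x, h x ∂P| ≤
      pNorm h p Q * τ ^ (1 - α + α / p) * Ialpha P Q α ^ (1 - 1 / p) := by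
  have hp1 : 1 < p := by linarith
  have hpq := Real.HolderConjugate.conjExponent hp1
  have hh : MemLp h (ENNReal.ofReal p) Q :=
    memLp_of_integrable_abs_rpow hmeas.aestronglyMeasurable (by linarith) hpnorm
  have hg := memLp_sub_min_of_integrable_rpow (lr_nonneg P Q) (measurable_lr P Q) hτ
    hpq.symm.pos hα1.le hI
  have := hpq.ennrealOfReal
  rw [integral_mul_min_lr_sub_integral hPQ (hh.integrable (by simpa using hp1.le))
    (hh.integrable_mul hg), abs_neg]
  calc _ ≤ pNorm h p Q * (τ ^ (p.conjExponent - α) * Ialpha P Q α) ^ (1 / p.conjExponent) :=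
        abs_integral_mul_sub_min_le hpq hh (lr_nonneg P Q) (measurable_lr P Q) hτ hα1.le hI
    _ = pNorm h p Q * τ ^ (1 - α + α / p) * Ialpha P Q α ^ (1 - 1 / p) := by
        have hp' : p - 1 ≠ 0 := by linarith
        have hτexp : (p.conjExponent - α) * (1 / p.conjExponent) = 1 - α + α / p := by
          simp only [Real.conjExponent]; field_simp; ring
        have hIexp : 1 / p.conjExponent = 1 - 1 / p := by
          simp only [Real.conjExponent]; field_simp
        have hIα : 0 ≤ Ialpha P Q α :=
          integral_nonneg fun x => Real.rpow_nonneg (lr_nonneg P Q x) α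
        rw [Real.mul_rpow (by positivity) hIα, ← Real.rpow_mul hτ.le, hτexp, hIexp, mul_assoc]

/-- Bias bound for the truncated likelihood-ratio estimator under the `p`-norm:
`|E_Q[h·min(l,τ)] − E_P[h]| ≤ ‖h‖_{p,Q} τ^{1−α+α/p} I_α(P‖Q)^{1−1/p}`. -/
theorem truncated_lr_bias_bound_pNorm
    {X : Type*} [MeasurableSpace X]
    (P Q : Measure X) [IsProbabilityMeasure P] [IsProbabilityMeasure Q]
    (hPQ : P ≪ Q) (h : X → ℝ) (hmeas : Measurable h)
    (p : ℝ) (hp : 2 < p) (hpnorm : Integrable (fun x => |h x| ^ p) Q)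
    (α : ℝ) (hα1 : p / (p - 1) < α) (hα2 : α < 2 * p / (p - 2))
    (hI : Integrable (fun x => lr P Q x ^ α) Q)
    (τ : ℝ) (hτ : 0 < τ) :
    |(∫ x, h x * min (lr P Q x) τ ∂Q) - ∫ x, h x ∂P| ≤
      pNorm h p Q * τ ^ (1 - α + α / p) * Ialpha P Q α ^ (1 - 1 / p) :=
  truncated_lr_bias_bound_pNorm_general P Q hPQ h hmeas p hp hpnorm α hα1 hI τ hτ
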